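/- arXiv:1707.09721 — 2 statements merged into one kernel-verified Lean document; each statement's English description precedes it below -/
import Mathlib

section
/- Let d be an odd positive integer. For all n ≥ 0, Ch_{n,λ} = Σ_{m=0}^{n} d^m · (Σ_{a=0}^{d-1} (-1)^a · E_{m,λ/d}(a/d)) · S₁(n,m), where Ch_{n,λ} are the degenerate Changhee numbers of the second kind and E_{m,μ}(x) are Carlitz's degenerate Euler polynomials with parameter μ = λ/d. -/
/-!
Write `u = (1+λt)^{1/λ}`. The generating function of `E_{m,λ}(0)` is `2/(u+1)`, and since `d` is
odd, `(u+1) Σ_{a<d} (-u)^a = u^d + 1`, so `2/(u+1) = Σ_{a<d} (-1)^a · 2u^a/(u^d+1)`. Substituting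
`t ↦ d t` turns `(1+(λ/d)t)^{x/(λ/d)}` into `(1+λt)^{dx/λ}`, so `2u^a/(u^d+1)` is the generating
function of `d^m E_{m,λ/d}(a/d)`. Comparing coefficients of `t^m/m!` and applying `S₁(n,·)` gives
the claim.
-/

open Finset PowerSeries

/-- The degenerate falling factorial `(x)_{n,λ}`. -/
noncomputable def df (l x : ℚ) (n : ℕ) : ℚ := ∏ i ∈ Finset.range n, (x - (i : ℚ) * l)

/-- The formal power series `(1+λt)^{x/λ} := Σ (x)_{n,λ} tⁿ/n!`. -/
noncomputable def B (l x : ℚ) : PowerSeries ℚ :=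
  PowerSeries.mk fun n => df l x n / n.factorial

/-- Signed Stirling numbers of the first kind. -/
def S1 : ℕ → ℕ → ℚ
  | 0, 0 => 1
  | 0, _ + 1 => 0
  | _ + 1, 0 => 0
  | n + 1, k + 1 => S1 n k - (n : ℚ) * S1 n (k + 1)

/-- Stirling numbers of the second kind. -/
def S2 : ℕ → ℕ → ℚ
  | 0, 0 => 1
  | 0, _ + 1 => 0
  | _ + 1, 0 => 0
  | n + 1, k + 1 => ((k : ℚ) + 1) * S2 n (k + 1) + S2 n k

/-- Degenerate Changhee polynomials of the second kind, built from a family `E`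
(intended: Carlitz degenerate Euler polynomials): `Ch_{n,λ}(x) = Σ_{l≤n} S₁(n,l) E_{l,λ}(x)`. -/
noncomputable def Ch (E : ℕ → ℚ → ℚ) (n : ℕ) (x : ℚ) : ℚ :=
  ∑ m ∈ Finset.range (n + 1), S1 n m * E m x

lemma df_succ (l x : ℚ) (n : ℕ) : df l x (n + 1) = df l x n * (x - n * l) :=
  prod_range_succ _ _

lemma df_zero_succ (l : ℚ) (n : ℕ) : df l 0 (n + 1) = 0 :=
  prod_eq_zero (mem_range.mpr n.succ_pos) (by simp)

lemma df_mul_mul (c l x : ℚ) (n : ℕ) : df (c * l) (c * x) n = c ^ n * df l x n := by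
  induction n with
  | zero => simp [df]
  | succ n ih => rw [df_succ, df_succ, ih]; ring

lemma df_add (l x y : ℚ) (n : ℕ) :
    df l (x + y) n = ∑ ij ∈ antidiagonal n, (n.choose ij.1 : ℚ) * (df l x ij.1 * df l y ij.2) := by
  induction n with
  | zero => simp [df]
  | succ n ih =>
    rw [sum_antidiagonal_choose_succ_mul (fun i j => df l x i * df l y j), ← sum_add_distrib,
      df_succ, ih, sum_mul]
    refine sum_congr rfl fun ij hij => ?_
    obtain ⟨i, j⟩ := ij
    have hn : (n : ℚ) = i + j := by exact_mod_cast (mem_antidiagonal.mp hij).symm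
    rw [Nat.choose_symm_of_eq_add (mem_antidiagonal.mp hij).symm, df_succ, df_succ, hn]
    ring

lemma coeff_B (l x : ℚ) (n : ℕ) : coeff n (B l x) = df l x n / n.factorial :=
  coeff_mk _ _

lemma B_add (l x y : ℚ) : B l (x + y) = B l x * B l y := by
  ext n
  rw [coeff_mul, coeff_B, df_add, sum_div]
  refine sum_congr rfl fun ij hij => ?_
  have hfac : (n.choose ij.1 : ℚ) * ij.1.factorial * ij.2.factorial = n.factorial := by
    rw [← mem_antidiagonal.mp hij, Nat.choose_symm_add]
    exact_mod_cast Nat.add_choose_mul_factorial_mul_factorial ij.1 ij.2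
  have hchoose : (n.choose ij.1 : ℚ) ≠ 0 :=
    Nat.cast_ne_zero.mpr (Nat.choose_pos (Nat.le.intro (mem_antidiagonal.mp hij))).ne'
  rw [coeff_B, coeff_B, ← hfac]
  field_simp

lemma B_zero (l : ℚ) : B l 0 = 1 := by
  ext (_ | n)
  · simp [coeff_B, df]
  · simp [coeff_B, df_zero_succ]

lemma B_natCast (l : ℚ) (a : ℕ) : B l a = B l 1 ^ a := by
  induction a with
  | zero => simp [B_zero]
  | succ a ih => rw [Nat.cast_succ, B_add, ih, pow_succ]

lemma rescale_B (c l x : ℚ) : rescale c (B l x) = B (c * l) (c * x) := by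
  ext n
  rw [coeff_rescale, coeff_B, coeff_B, df_mul_mul]
  ring

lemma B_add_one_ne_zero (l x : ℚ) : B l x + 1 ≠ 0 := fun h => by
  have h0 := congrArg (coeff 0) h
  rw [map_add, coeff_B, coeff_one] at h0
  norm_num [df] at h0

lemma Odd.add_one_mul_sum_neg_pow {R : Type*} [CommRing R] {d : ℕ} (hd : Odd d) (x : R) :
    (x + 1) * ∑ a ∈ range d, (-x) ^ a = x ^ d + 1 := by
  linear_combination (-1 : R) * geom_sum_mul (-x) d - hd.neg_pow x

lemma eulerGF_zero_eq_sum_rescale (l : ℚ) (d : ℕ) (hd : Odd d) (e : ℕ → ℚ) (F : ℕ → ℚ → ℚ)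
    (he : (mk fun n => e n / n.factorial) * (B l 1 + 1) = 2)
    (hF : ∀ x : ℚ, (mk fun n => F n x / n.factorial) * (B (l / d) 1 + 1) = 2 * B (l / d) x) :
    (mk fun n => e n / n.factorial) =
      ∑ a ∈ range d,
        (-1 : ℚ) ^ a • rescale (d : ℚ) (mk fun n => F n ((a : ℚ) / d) / n.factorial) := by
  have hd0 : (d : ℚ) ≠ 0 := Nat.cast_ne_zero.mpr hd.pos.ne'
  set u := B l 1
  have hrescale (x : ℚ) : rescale (d : ℚ) (B (l / d) x) = B l (d * x) := by
    rw [rescale_B, mul_div_cancel₀ _ hd0]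
  have hFa (a : ℕ) : rescale (d : ℚ) (mk fun n => F n ((a : ℚ) / d) / n.factorial) * (u ^ d + 1)
      = 2 * u ^ a := by
    have h := congrArg (rescale (d : ℚ)) (hF ((a : ℚ) / d))
    rwa [map_mul, map_add, map_one, map_mul, map_ofNat, hrescale, hrescale, mul_one,
      mul_div_cancel₀ _ hd0, B_natCast, B_natCast] at h
  have he' : (mk fun n => e n / n.factorial) * (u ^ d + 1) = 2 * ∑ a ∈ range d, (-u) ^ a := by
    rw [← hd.add_one_mul_sum_neg_pow, ← mul_assoc, he]
  refine mul_right_cancel₀ (B_natCast l d ▸ B_add_one_ne_zero l d) ?_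
  rw [he', sum_mul, mul_sum]
  refine sum_congr rfl fun a _ => ?_
  rw [smul_mul_assoc, hFa, neg_pow, smul_eq_C_mul, map_pow, map_neg, map_one]
  ring

lemma eq_pow_mul_sum_of_eulerGF (l : ℚ) (d : ℕ) (hd : Odd d) (e : ℕ → ℚ) (F : ℕ → ℚ → ℚ)
    (he : (mk fun n => e n / n.factorial) * (B l 1 + 1) = 2)
    (hF : ∀ x : ℚ, (mk fun n => F n x / n.factorial) * (B (l / d) 1 + 1) = 2 * B (l / d) x)
    (m : ℕ) :
    e m = (d : ℚ) ^ m * ∑ a ∈ range d, (-1 : ℚ) ^ a * F m ((a : ℚ) / d) := by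
  have h := congrArg (coeff m) (eulerGF_zero_eq_sum_rescale l d hd e F he hF)
  simp only [coeff_mk, coeff_rescale, map_sum, map_smul, smul_eq_mul] at h
  rw [div_eq_iff (Nat.cast_ne_zero.mpr m.factorial_ne_zero)] at h
  rw [h, mul_sum, sum_mul]
  refine sum_congr rfl fun a _ => ?_
  field_simp

theorem stmt6_general (l : ℚ) (d : ℕ) (hd : Odd d) (E F : ℕ → ℚ → ℚ)
    (hE : ∀ x : ℚ, (PowerSeries.mk fun n => E n x / n.factorial) * (B l 1 + 1)
      = 2 * B l x)
    (hF : ∀ x : ℚ, (PowerSeries.mk fun n => F n x / n.factorial) * (B (l / d) 1 + 1)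
      = 2 * B (l / d) x) :
    ∀ n : ℕ, Ch E n 0 =
      ∑ m ∈ Finset.range (n + 1),
        (d : ℚ) ^ m * (∑ a ∈ Finset.range d, (-1 : ℚ) ^ a * F m ((a : ℚ) / d)) * S1 n m := by
  have hE0 : (PowerSeries.mk fun n => E n 0 / n.factorial) * (B l 1 + 1) = 2 := by
    rw [hE 0, B_zero, mul_one]
  intro n
  refine sum_congr rfl fun m _ => ?_
  rw [eq_pow_mul_sum_of_eulerGF l d hd (E · 0) F hE0 hF m]
  ring

/-- For odd `d ≥ 1`: `Ch_{n,λ} = Σ_{m≤n} dᵐ (Σ_{a<d} (-1)^a E_{m,λ/d}(a/d)) S₁(n,m)`,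
where `E` (resp. `F`) are the degenerate Euler polynomials with parameter `λ` (resp. `λ/d`). -/
theorem stmt6 (l : ℚ) (d : ℕ) (hd0 : 0 < d) (hd : Odd d) (E F : ℕ → ℚ → ℚ)
    (hE : ∀ x : ℚ, (PowerSeries.mk fun n => E n x / n.factorial) * (B l 1 + 1)
      = 2 * B l x)
    (hF : ∀ x : ℚ, (PowerSeries.mk fun n => F n x / n.factorial) * (B (l / d) 1 + 1)
      = 2 * B (l / d) x) :
    ∀ n : ℕ, Ch E n 0 =
      ∑ m ∈ Finset.range (n + 1),
        (d : ℚ) ^ m * (∑ a ∈ Finset.range d, (-1 : ℚ) ^ a * F m ((a : ℚ) / d)) * S1 n m :=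
  stmt6_general l d hd E F hE hF
end

section
/- For all r ≥ 1 and n ≥ 0, the higher-order degenerate Changhee numbers of the second kind satisfy Ch^{(r)}_{n,λ} = Σ_{k=0}^{n} Σ_{m=0}^{k} (-1)^m · m! · C(r+m-1, m) · 2^{-m} · S_{2,λ}(k,m) · S₁(n,k). -/
/-!
Since `B l 1` has constant term `1`, the series `u = (B l 1 - 1) / 2` has zero constant term and
`B l 1 + 1 = 2 (1 + u)`. Hence the exponential generating function of `E` is `(1 + u)⁻ʳ`, the
binomial series `Σₘ (-1)ᵐ C(r+m-1,m) Xᵐ` with `u` substituted for `X`. By the definition of `S2l`,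
`uᵐ = 2⁻ᵐ m! Σₖ S2l k m tᵏ/k!`, and `uᵐ` has order at least `m`, so comparing coefficients of `tᵏ`
expresses `E k` as the inner sum over `m ≤ k`.
-/

open Finset PowerSeries

namespace PowerSeries

theorem coeff_pow_eq_zero_of_lt {R : Type*} [Semiring R] {u : R⟦X⟧} (hu : constantCoeff u = 0)
    {n m : ℕ} (h : n < m) : coeff n (u ^ m) = 0 :=
  coeff_of_lt_order n ((Nat.cast_lt.2 h).trans_le (le_order_pow_of_constantCoeff_eq_zero m hu))

variable {A : Type*} [CommRing A]

theorem coeff_subst_eq_sum_range {u : A⟦X⟧} (hu : constantCoeff u = 0) (f : A⟦X⟧) (n : ℕ) :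
    coeff n (f.subst u) = ∑ m ∈ range (n + 1), coeff m f * coeff n (u ^ m) := by
  rw [coeff_subst' (HasSubst.of_constantCoeff_zero' hu)]
  refine finsum_eq_sum_of_support_subset _ fun m hm => ?_
  rw [coe_range, Set.mem_Iio, Nat.lt_succ_iff]
  by_contra! h
  exact hm (by simp only [coeff_pow_eq_zero_of_lt hu h, smul_zero])

-- For `r = 0` the truncated subtraction is harmless: both sides are `1` at `n = 0` and `0` after.
theorem coeff_binomialSeries_neg_natCast (r n : ℕ) :
    coeff n (binomialSeries A (-(r : ℤ))) = (-1) ^ n * ((r + n - 1).choose n : A) := by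
  rcases r with _ | r
  · rcases n with _ | n <;> simp
  · rw [binomialSeries_coeff, Ring.choose_neg,
      show ((r + 1 : ℕ) : ℤ) + n - 1 = (r + n : ℕ) by push_cast; ring, Ring.choose_natCast,
      Units.smul_def, smul_eq_mul, zsmul_eq_mul, mul_one, Int.cast_mul,
      Int.cast_negOnePow_natCast, show r + 1 + n - 1 = r + n by omega]
    norm_cast

theorem one_add_X_pow_mul_binomialSeries_neg (r : ℕ) :
    (1 + X : A⟦X⟧) ^ r * binomialSeries A (-(r : ℤ)) = 1 := by
  rw [← binomialSeries_nat (R := ℤ), ← binomialSeries_add, add_neg_cancel, binomialSeries_zero]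

theorem one_add_pow_mul_subst_binomialSeries_neg {u : A⟦X⟧} (hu : constantCoeff u = 0) (r : ℕ) :
    (1 + u) ^ r * (binomialSeries A (-(r : ℤ))).subst u = 1 := by
  have := congrArg (substAlgHom (R := A) (HasSubst.of_constantCoeff_zero' hu))
    (one_add_X_pow_mul_binomialSeries_neg (A := A) r)
  rwa [map_mul, map_pow, map_add, map_one, substAlgHom_X, coe_substAlgHom] at this

end PowerSeries

theorem constantCoeff_B (l x : ℚ) : constantCoeff (B l x) = 1 := by
  simp [B, df]

theorem constantCoeff_C_mul_B_sub_one (c l x : ℚ) : constantCoeff (C c * (B l x - 1)) = 0 := by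
  simp [constantCoeff_B]

section DegenerateEuler

variable (l : ℚ) (r : ℕ) (E : ℕ → ℚ)

theorem egf_eq_binomialSeries_subst_of_mul_B_add_one_pow
    (hE : (PowerSeries.mk fun n => E n / n.factorial) * (B l 1 + 1) ^ r = 2 ^ r) :
    (PowerSeries.mk fun n => E n / n.factorial)
      = (binomialSeries ℚ (-(r : ℤ))).subst (C 2⁻¹ * (B l 1 - 1)) := by
  have hB : B l 1 + 1 = 2 * (1 + C 2⁻¹ * (B l 1 - 1)) := by
    rw [mul_add, ← mul_assoc, ← map_ofNat C 2, ← map_mul, mul_inv_cancel₀ two_ne_zero,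
      map_one, map_ofNat C 2]
    ring
  have hne : (B l 1 + 1) ^ r ≠ 0 :=
    pow_ne_zero r fun h => by simpa [constantCoeff_B] using congrArg constantCoeff h
  refine mul_right_cancel₀ hne ?_
  rw [hE, hB, mul_pow, mul_comm, mul_assoc, one_add_pow_mul_subst_binomialSeries_neg
    (constantCoeff_C_mul_B_sub_one _ _ _), mul_one]

theorem eq_sum_S2l_of_mul_B_add_one_pow (S2l : ℕ → ℕ → ℚ)
    (hE : (PowerSeries.mk fun n => E n / n.factorial) * (B l 1 + 1) ^ r = 2 ^ r)
    (hS : ∀ m : ℕ, (B l 1 - 1) ^ m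
      = (m.factorial : ℚ) • PowerSeries.mk fun n => S2l n m / n.factorial) (k : ℕ) :
    E k = ∑ m ∈ range (k + 1),
      (-1 : ℚ) ^ m * m.factorial * ((r + m - 1).choose m : ℚ) * (2 : ℚ)⁻¹ ^ m * S2l k m := by
  have hcoeff := congrArg (coeff k) (egf_eq_binomialSeries_subst_of_mul_B_add_one_pow l r E hE)
  rw [coeff_mk, coeff_subst_eq_sum_range (constantCoeff_C_mul_B_sub_one _ _ _),
    div_eq_iff (by positivity), sum_mul] at hcoeff
  refine hcoeff.trans (sum_congr rfl fun m _ => ?_)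
  rw [coeff_binomialSeries_neg_natCast, mul_pow, ← map_pow, coeff_C_mul, hS, coeff_smul, coeff_mk,
    smul_eq_mul]
  field_simp

end DegenerateEuler

theorem stmt13_general (l : ℚ) (r : ℕ) (E : ℕ → ℚ) (S2l : ℕ → ℕ → ℚ)
    (hE : (PowerSeries.mk fun n => E n / n.factorial) * (B l 1 + 1) ^ r
      = 2 ^ r)
    (hS : ∀ m : ℕ, (B l 1 - 1) ^ m
      = (m.factorial : ℚ) • PowerSeries.mk fun n => S2l n m / n.factorial) :
    ∀ n : ℕ, (∑ k ∈ Finset.range (n + 1), S1 n k * E k)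
      = ∑ k ∈ Finset.range (n + 1), ∑ m ∈ Finset.range (k + 1),
          (-1 : ℚ) ^ m * m.factorial * ((r + m - 1).choose m : ℚ) * (2 : ℚ)⁻¹ ^ m *
            S2l k m * S1 n k := by
  intro n
  refine sum_congr rfl fun k _ => ?_
  rw [eq_sum_S2l_of_mul_B_add_one_pow l r E S2l hE hS k, mul_comm, sum_mul]

/-- For `E⁽ʳ⁾` the order-r degenerate Euler numbers and `S2l` the degenerate Stirling
numbers of the second kind:
`Ch⁽ʳ⁾_{n,λ} = Σ_{k≤n} Σ_{m≤k} (-1)ᵐ m! C(r+m-1,m) 2⁻ᵐ S_{2,λ}(k,m) S₁(n,k)`,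
where `Ch⁽ʳ⁾_{n,λ} = Σ_{k≤n} S₁(n,k) E⁽ʳ⁾_{k,λ}`. -/
theorem stmt13 (l : ℚ) (r : ℕ) (hr : 1 ≤ r) (E : ℕ → ℚ) (S2l : ℕ → ℕ → ℚ)
    (hE : (PowerSeries.mk fun n => E n / n.factorial) * (B l 1 + 1) ^ r
      = 2 ^ r)
    (hS : ∀ m : ℕ, (B l 1 - 1) ^ m
      = (m.factorial : ℚ) • PowerSeries.mk fun n => S2l n m / n.factorial) :
    ∀ n : ℕ, (∑ k ∈ Finset.range (n + 1), S1 n k * E k)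
      = ∑ k ∈ Finset.range (n + 1), ∑ m ∈ Finset.range (k + 1),
          (-1 : ℚ) ^ m * m.factorial * ((r + m - 1).choose m : ℚ) * (2 : ℚ)⁻¹ ^ m *
            S2l k m * S1 n k :=
  stmt13_general l r E S2l hE hS
end
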